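/- arXiv:1307.2297 — 2 statements merged into one kernel-verified Lean document; each statement's English description precedes it below -/
import Mathlib

section
/- With Θ, θ̂, f, and h as in the previous context (f continuous, f(θ̂)=0, f > 0 off θ̂, strictly increasing along each ray from θ̂ within Θ, and f(θ) → ∞ at the boundary of Θ, with Θ bounded and star-shaped about θ̂), the map h(θ) = θ̂ + (1 + f(θ)/(2N))(θ − θ̂) is a bijection from Θ onto ℝ^d. -/
/-!
Along the ray `t ↦ θ̂ + t • u` (`‖u‖ = 1`) the map `h` acts as `θ̂ + t • u ↦ θ̂ + φ(t) • u` with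
radial profile `φ(t) = t (1 + f(θ̂ + t • u) / (2N))`. Since `Θ` is open, bounded and star-shaped,
the ray meets `Θ` in an interval `[0, T)` whose endpoint lies on the frontier of `Θ`. There `φ` is
continuous, strictly increasing, `φ(0) = 0`, and `φ(t) → ∞` as `t → T⁻` because `f` blows up at the
frontier; so `φ` maps `[0, T)` bijectively onto `[0, ∞)`, and these ray-wise bijections glue to a
bijection `Θ → ℝ^d`.
-/

open Filter Set Topology

theorem bijOn_id_mul_Ico_Ici {g : ℝ → ℝ} {T : ℝ} (hT : 0 < T) (hpos : ∀ t ∈ Ico 0 T, 0 < g t)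
    (hmono : MonotoneOn g (Ico 0 T)) (hcont : ContinuousOn g (Ico 0 T))
    (htop : Tendsto g (𝓝[<] T) atTop) :
    BijOn (fun t => t * g t) (Ico 0 T) (Ici 0) := by
  refine ⟨fun t ht => mul_nonneg ht.1 (hpos t ht).le, ?_, ?_⟩
  · refine StrictMonoOn.injOn fun a ha b hb hab => ?_
    calc a * g a ≤ a * g b := mul_le_mul_of_nonneg_left (hmono ha hb hab.le) ha.1
      _ < b * g b := mul_lt_mul_of_pos_right hab (hpos b hb)
  · intro y hy
    have hφ : Tendsto (fun t => t * g t) (𝓝[<] T) atTop :=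
      (tendsto_id.mono_left nhdsWithin_le_nhds).pos_mul_atTop hT htop
    obtain ⟨t₀, hyt₀, ht₀⟩ := ((hφ.eventually_ge_atTop y).and (Ioo_mem_nhdsLT hT)).exists
    have hsub : Icc 0 t₀ ⊆ Ico 0 T := Icc_subset_Ico_right ht₀.2
    obtain ⟨t, ht, rfl⟩ := intermediate_value_Icc ht₀.1.le
      ((continuousOn_id.mul hcont).mono hsub) ⟨by simpa using hy, hyt₀⟩
    exact ⟨t, hsub ht, rfl⟩

section Rays

variable {E : Type*} [NormedAddCommGroup E] [NormedSpace ℝ E] {Θ : Set E} {θ₀ u : E}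

def raySet (Θ : Set E) (θ₀ u : E) : Set ℝ := {t | 0 ≤ t ∧ θ₀ + t • u ∈ Θ}

theorem StarConvex.mem_raySet_of_le (hstar : StarConvex ℝ θ₀ Θ) {s t : ℝ}
    (ht : t ∈ raySet Θ θ₀ u) (hs : 0 ≤ s) (hst : s ≤ t) : s ∈ raySet Θ θ₀ u := by
  rcases ht.1.eq_or_lt with rfl | htpos
  · rwa [le_antisymm hst hs]
  refine ⟨hs, ?_⟩
  have := hstar.add_smul_mem ht.2 (div_nonneg hs htpos.le) (div_le_one_of_le₀ hst htpos.le)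
  rwa [smul_smul, div_mul_cancel₀ _ htpos.ne'] at this

theorem exists_raySet_eq_Ico (hopen : IsOpen Θ) (hbdd : Bornology.IsBounded Θ)
    (hstar : StarConvex ℝ θ₀ Θ) (hθ₀ : θ₀ ∈ Θ) (hu : u ≠ 0) :
    ∃ T > 0, raySet Θ θ₀ u = Ico 0 T := by
  have hO : IsOpen {t : ℝ | θ₀ + t • u ∈ Θ} := hopen.preimage (by fun_prop)
  have hnext : ∀ t ∈ raySet Θ θ₀ u, ∃ t' ∈ raySet Θ θ₀ u, t < t' := by
    intro t ht
    have hright : ∀ᶠ s in 𝓝[>] t, θ₀ + s • u ∈ Θ ∧ t < s :=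
      (eventually_nhdsWithin_of_eventually_nhds (hO.mem_nhds ht.2)).and eventually_mem_nhdsWithin
    obtain ⟨t', ht'Θ, htt'⟩ := hright.exists
    exact ⟨t', ⟨ht.1.trans htt'.le, ht'Θ⟩, htt'⟩
  have h0 : (0 : ℝ) ∈ raySet Θ θ₀ u := ⟨le_rfl, by simpa using hθ₀⟩
  have hbddS : BddAbove (raySet Θ θ₀ u) := by
    obtain ⟨C, hC⟩ := isBounded_iff_forall_norm_le.1 hbdd
    refine ⟨(C + ‖θ₀‖) / ‖u‖, fun t ht => (le_div_iff₀ (norm_pos_iff.2 hu)).2 ?_⟩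
    calc t * ‖u‖ = ‖(θ₀ + t • u) - θ₀‖ := by
          rw [add_sub_cancel_left, norm_smul, Real.norm_of_nonneg ht.1]
      _ ≤ C + ‖θ₀‖ := (norm_sub_le _ _).trans (by gcongr; exact hC _ ht.2)
  refine ⟨sSup (raySet Θ θ₀ u), ?_, ?_⟩
  · obtain ⟨t, ht, htpos⟩ := hnext 0 h0
    exact htpos.trans_le (le_csSup hbddS ht)
  ext t
  refine ⟨fun ht => ⟨ht.1, (le_csSup hbddS ht).lt_of_ne fun hsup => ?_⟩, fun ht => ?_⟩
  · obtain ⟨t', ht', htt'⟩ := hnext t ht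
    exact (le_csSup hbddS ht').not_gt (hsup ▸ htt')
  · obtain ⟨t', ht', htt'⟩ := exists_lt_of_lt_csSup ⟨0, h0⟩ ht.2
    exact hstar.mem_raySet_of_le ht' ht.1 htt'.le

variable {T : ℝ}

theorem tendsto_nhdsWithin_raySet_endpoint (hS : raySet Θ θ₀ u = Ico 0 T) (hT : 0 < T) :
    Tendsto (fun t : ℝ => θ₀ + t • u) (𝓝[<] T) (𝓝[Θ] (θ₀ + T • u)) := by
  have hline : Continuous fun t : ℝ => θ₀ + t • u := by fun_prop
  refine tendsto_nhdsWithin_iff.2 ⟨(hline.tendsto T).mono_left nhdsWithin_le_nhds, ?_⟩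
  filter_upwards [Ioo_mem_nhdsLT hT] with t ht
  exact (hS.symm ▸ Ioo_subset_Ico_self ht : t ∈ raySet Θ θ₀ u).2

theorem raySet_endpoint_mem_frontier (hopen : IsOpen Θ) (hS : raySet Θ θ₀ u = Ico 0 T)
    (hT : 0 < T) : θ₀ + T • u ∈ frontier Θ := by
  rw [hopen.frontier_eq]
  refine ⟨mem_closure_iff_nhdsWithin_neBot.2 (tendsto_nhdsWithin_raySet_endpoint hS hT).neBot,
    fun hmem => ?_⟩
  have : T ∈ raySet Θ θ₀ u := ⟨hT.le, hmem⟩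
  rw [hS] at this
  exact lt_irrefl T this.2

theorem exists_eq_add_smul_of_ne {θ : E} (hne : θ ≠ θ₀) :
    ∃ t : ℝ, 0 < t ∧ ∃ u : E, ‖u‖ = 1 ∧ θ = θ₀ + t • u := by
  have hv : θ - θ₀ ≠ 0 := sub_ne_zero.2 hne
  refine ⟨‖θ - θ₀‖, norm_pos_iff.2 hv, ‖θ - θ₀‖⁻¹ • (θ - θ₀), norm_smul_inv_norm hv, ?_⟩
  rw [smul_smul, mul_inv_cancel₀ (norm_ne_zero_iff.2 hv), one_smul, add_sub_cancel]

theorem bijOn_radial {c : E → ℝ} (hθ₀ : θ₀ ∈ Θ) (hc : ∀ θ ∈ Θ, 0 < c θ)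
    (hprofile : ∀ u : E, ‖u‖ = 1 →
      BijOn (fun t => t * c (θ₀ + t • u)) (raySet Θ θ₀ u) (Ici 0)) :
    BijOn (fun θ => θ₀ + c θ • (θ - θ₀)) Θ univ := by
  have hmap_ray : ∀ (t : ℝ) (u : E),
      θ₀ + c (θ₀ + t • u) • (θ₀ + t • u - θ₀) = θ₀ + (t * c (θ₀ + t • u)) • u := by
    intro t u
    rw [add_sub_cancel_left, smul_smul, mul_comm]
  refine ⟨mapsTo_univ _ _, fun θ₁ hθ₁ θ₂ hθ₂ heq => ?_, fun y _ => ?_⟩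
  · have hv : c θ₂ • (θ₂ - θ₀) = c θ₁ • (θ₁ - θ₀) := (add_left_cancel heq).symm
    rcases eq_or_ne θ₁ θ₀ with rfl | hne
    · simpa [(hc θ₂ hθ₂).ne', sub_eq_zero, eq_comm] using hv
    obtain ⟨t, ht, u, hu, rfl⟩ := exists_eq_add_smul_of_ne hne
    obtain ⟨r, hr⟩ : ∃ r : ℝ, r = c (θ₀ + t • u) / c θ₂ * t := ⟨_, rfl⟩
    have hθ₂r : θ₂ = θ₀ + r • u := by
      rw [← sub_eq_iff_eq_add', ← smul_right_inj (hc θ₂ hθ₂).ne', hv, add_sub_cancel_left,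
        smul_smul, smul_smul, hr, ← mul_assoc, mul_div_cancel₀ _ (hc θ₂ hθ₂).ne']
    have hφ : r * c (θ₀ + r • u) = t * c (θ₀ + t • u) := by
      rw [← hθ₂r, hr, div_mul_eq_mul_div, div_mul_cancel₀ _ (hc θ₂ hθ₂).ne', mul_comm]
    have hrt : r = t := (hprofile u hu).injOn
      ⟨hr ▸ mul_nonneg (div_pos (hc _ hθ₁) (hc θ₂ hθ₂)).le ht.le, hθ₂r ▸ hθ₂⟩ ⟨ht.le, hθ₁⟩ hφ
    rw [hθ₂r, hrt]
  · rcases eq_or_ne y θ₀ with rfl | hne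
    · exact ⟨y, hθ₀, by simp⟩
    obtain ⟨s, hs, u, hu, rfl⟩ := exists_eq_add_smul_of_ne hne
    obtain ⟨t, ht, hts⟩ := (hprofile u hu).surjOn (mem_Ici.2 hs.le)
    refine ⟨θ₀ + t • u, ht.2, ?_⟩
    dsimp only at hts ⊢
    rw [hmap_ray, hts]

end Rays

theorem composite_similarity_bijective
    (d : ℕ) (Θ : Set (EuclideanSpace ℝ (Fin d))) (θhat : EuclideanSpace ℝ (Fin d))
    (f : EuclideanSpace ℝ (Fin d) → ℝ) (N : ℝ) (hN : 0 < N)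
    (hopen : IsOpen Θ) (hbdd : Bornology.IsBounded Θ) (hmem : θhat ∈ Θ)
    (hstar : StarConvex ℝ θhat Θ)
    (hfcont : ContinuousOn f Θ)
    (hf0 : f θhat = 0) (hfpos : ∀ θ ∈ Θ, θ ≠ θhat → 0 < f θ)
    (hray : ∀ u : EuclideanSpace ℝ (Fin d), ‖u‖ = 1 →
      StrictMonoOn (fun t : ℝ => f (θhat + t • u)) {t : ℝ | 0 ≤ t ∧ θhat + t • u ∈ Θ})
    (hblowup : ∀ θb ∈ frontier Θ, Tendsto f (nhdsWithin θb Θ) atTop)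
    (h : EuclideanSpace ℝ (Fin d) → EuclideanSpace ℝ (Fin d))
    (hdef : ∀ θ, h θ = θhat + (1 + f θ / (2 * N)) • (θ - θhat)) :
    Set.BijOn h Θ Set.univ := by
  have hfnn : ∀ θ ∈ Θ, 0 ≤ f θ := fun θ hθ =>
    (eq_or_ne θ θhat).elim (fun hθ => hθ ▸ hf0.ge) fun hne => (hfpos θ hθ hne).le
  have hc : ∀ θ ∈ Θ, 0 < 1 + f θ / (2 * N) := fun θ hθ => by
    have := hfnn θ hθ
    positivity
  rw [funext hdef]
  refine bijOn_radial hmem hc fun u hu => ?_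
  obtain ⟨T, hT, hS⟩ :=
    exists_raySet_eq_Ico hopen hbdd hstar hmem (norm_ne_zero_iff.1 (hu ▸ one_ne_zero))
  have hmemΘ : ∀ t ∈ Ico 0 T, θhat + t • u ∈ Θ := fun t ht =>
    (hS.symm ▸ ht : t ∈ raySet Θ θhat u).2
  rw [hS]
  refine bijOn_id_mul_Ico_Ici hT (fun t ht => hc _ (hmemΘ t ht)) ?_ ?_ ?_
  · intro a ha b hb hab
    have := (hray u hu).monotoneOn (hS.symm ▸ ha : a ∈ raySet Θ θhat u)
      (hS.symm ▸ hb : b ∈ raySet Θ θhat u) hab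
    dsimp only
    gcongr
  · exact continuousOn_const.add ((hfcont.comp (by fun_prop) hmemΘ).div_const _)
  · have hblow := (hblowup _ (raySet_endpoint_mem_frontier hopen hS hT)).comp
      (tendsto_nhdsWithin_raySet_endpoint hS hT)
    exact tendsto_atTop_add_const_left _ 1 (hblow.atTop_div_const (by positivity))
end

section
/- Let h(θ) = θ̂ + γ(f(θ))(θ − θ̂) where γ : [0,∞) → [1,∞) is continuous with γ(0) = 1 and t ↦ t·γ(g(t)) strictly increasing to ∞ along every ray (g the radial restriction of f). If θ_0' = h^{-1}(θ_0), then θ_0' ∈ [θ̂, θ_0] and θ_0 − θ_0' = (γ(f(θ_0')) − 1)(θ_0' − θ̂). In particular, with γ(s) = 1 + s/(2N), ‖θ_0 − θ_0'‖ = f(θ_0')‖θ_0' − θ̂‖/(2N). -/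
open Filter

theorem general_expansion_inverse_on_segment
    (d : ℕ) (Θ : Set (EuclideanSpace ℝ (Fin d))) (θhat : EuclideanSpace ℝ (Fin d))
    (f : EuclideanSpace ℝ (Fin d) → ℝ) (N : ℝ) (hN : 0 < N)
    (hopen : IsOpen Θ) (hbdd : Bornology.IsBounded Θ) (hmem : θhat ∈ Θ)
    (hstar : StarConvex ℝ θhat Θ)
    (hfcont : ContinuousOn f Θ)
    (hf0 : f θhat = 0) (hfnonneg : ∀ θ ∈ Θ, 0 ≤ f θ)
    (hray : ∀ u : EuclideanSpace ℝ (Fin d), ‖u‖ = 1 →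
      StrictMonoOn (fun t : ℝ => f (θhat + t • u)) {t : ℝ | 0 ≤ t ∧ θhat + t • u ∈ Θ})
    (hblowup : ∀ θb ∈ frontier Θ, Tendsto f (nhdsWithin θb Θ) atTop)
    (γ : ℝ → ℝ) (hγcont : Continuous γ) (hγ0 : γ 0 = 1) (hγge : ∀ s, 0 ≤ s → 1 ≤ γ s)
    (hγray : ∀ u : EuclideanSpace ℝ (Fin d), ‖u‖ = 1 →
      StrictMonoOn (fun t : ℝ => t * γ (f (θhat + t • u)))
        {t : ℝ | 0 ≤ t ∧ θhat + t • u ∈ Θ})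
    (h : EuclideanSpace ℝ (Fin d) → EuclideanSpace ℝ (Fin d))
    (hdef : ∀ θ, h θ = θhat + γ (f θ) • (θ - θhat))
    (hbij : Set.BijOn h Θ Set.univ)
    (θ₀ θ₀' : EuclideanSpace ℝ (Fin d)) (hθ₀' : θ₀' ∈ Θ) (hinv : h θ₀' = θ₀) :
    θ₀' ∈ segment ℝ θhat θ₀ ∧
      θ₀ - θ₀' = (γ (f θ₀') - 1) • (θ₀' - θhat) ∧
      ((∀ s, γ s = 1 + s / (2 * N)) →
        ‖θ₀ - θ₀'‖ = f θ₀' * ‖θ₀' - θhat‖ / (2 * N)) := by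
  set c := γ (f θ₀') with hc
  have hc1 : 1 ≤ c := hγge _ (hfnonneg _ hθ₀')
  have hc0 : c ≠ 0 := by linarith
  have hθ₀ : θ₀ = θhat + c • (θ₀' - θhat) := by rw [← hinv, hdef]
  have hdiff : θ₀ - θ₀' = (c - 1) • (θ₀' - θhat) := by
    rw [hθ₀, sub_smul, one_smul]; abel
  refine ⟨?_, hdiff, ?_⟩
  · rw [segment_eq_image]
    refine ⟨c⁻¹, ⟨by positivity, inv_le_one_of_one_le₀ hc1⟩, ?_⟩
    rw [hθ₀]
    match_scalars <;> field_simp <;> ring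
  · intro hγs
    have hfnn : 0 ≤ f θ₀' := hfnonneg _ hθ₀'
    rw [hdiff, norm_smul, hc, hγs, add_sub_cancel_left]
    rw [Real.norm_eq_abs, abs_of_nonneg (by positivity)]
    ring
end
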